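/- Let R be a commutative ring and let X be a finite simplicial complex on a linearly ordered vertex set V with |V| = m, and assume X is not the full simplex on V. For p ≥ −1 and i ≥ 0 set N_{p,i} := ⊕_{J ⊆ V, |J| = p+1} H_i(X[V∖J];R), and let δ : N_{p,i} → N_{p−1,i} be the map whose component from the summand of J = {j_0 < ⋯ < j_p} to the summand of J∖{j_k} is (−1)^k times the map induced by the inclusion X[V∖J] ⊆ X[V∖(J∖{j_k})] (this is the augmented first page, in row i, of the Mayer–Vietoris spectral sequence of the anti-star cover {X[V∖{v}]}_{v∈V}). Then δ∘δ = 0, and for every i ≥ 0 and every 0 ≤ j ≤ m the homology of the complex (N_{•,i}, δ) at position p = m − j − 1 is isomorphic as an R-module to B^j_i(X;R). -/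

import Mathlib

set_option linter.unusedSectionVars false

noncomputable section

open Finset

/-- A finite simplicial complex on a finite vertex set `V`: a collection of nonempty
subsets of `V` (its faces) containing every singleton and closed under nonempty subsets. -/
structure SComplex (V : Type) [DecidableEq V] [Fintype V] where
  faces : Finset (Finset V)
  nonempty_mem : ∀ σ ∈ faces, σ.Nonempty
  singleton_mem : ∀ v : V, ({v} : Finset V) ∈ faces
  down_closed : ∀ σ ∈ faces, ∀ τ ⊆ σ, τ.Nonempty → τ ∈ faces

variable {V : Type} [Fintype V] [LinearOrder V]

/-- The induced subcomplex `X[W]`: all faces of `X` contained in `W`. -/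
def SComplex.induced (X : SComplex V) (W : Finset V) : Finset (Finset V) :=
  X.faces.filter (fun σ => σ ⊆ W)

theorem SComplex.induced_mono (X : SComplex V) {W W' : Finset V} (h : W ⊆ W') :
    X.induced W ⊆ X.induced W' := by
  intro σ hσ
  simp only [SComplex.induced, mem_filter] at *
  exact ⟨hσ.1, hσ.2.trans h⟩

theorem SComplex.induced_down (X : SComplex V) (W : Finset V) :
    ∀ σ ∈ X.induced W, ∀ τ ⊆ σ, τ.Nonempty → τ ∈ X.induced W := by
  intro σ hσ τ hτ hne
  simp only [SComplex.induced, mem_filter] at *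
  exact ⟨X.down_closed σ hσ.1 τ hτ hne, hτ.trans hσ.2⟩

theorem SComplex.empty_not_mem_induced (X : SComplex V) (W : Finset V) :
    (∅ : Finset V) ∉ X.induced W := by
  simp only [SComplex.induced, mem_filter]
  rintro ⟨h, -⟩
  exact absurd (X.nonempty_mem ∅ h) (by simp)

/-- `faceRemove σ k` is `σ` with its `(k+1)`-st smallest element removed. -/
def faceRemove (σ : Finset V) (k : ℕ) : Finset V :=
  ((σ.sort (· ≤ ·)).eraseIdx k).toFinset

theorem faceRemove_subset (σ : Finset V) (k : ℕ) : faceRemove σ k ⊆ σ := by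
  intro x hx
  rw [faceRemove, List.mem_toFinset] at hx
  have := List.eraseIdx_subset hx
  rwa [Finset.mem_sort] at this

variable (R : Type) [CommRing R]

/-- The module of `R`-chains supported on the faces of cardinality `n` belonging to `F`
(so of geometric dimension `n - 1`). -/
def Chains (F : Finset (Finset V)) (n : ℕ) : Type :=
  {σ : Finset V // σ ∈ F ∧ σ.card = n} →₀ R

instance (F : Finset (Finset V)) (n : ℕ) : AddCommGroup (Chains R F n) :=
  inferInstanceAs (AddCommGroup ({σ : Finset V // σ ∈ F ∧ σ.card = n} →₀ R))

instance (F : Finset (Finset V)) (n : ℕ) : Module R (Chains R F n) :=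
  inferInstanceAs (Module R ({σ : Finset V // σ ∈ F ∧ σ.card = n} →₀ R))

/-- The basis chain corresponding to a single face. -/
def chainGen (F : Finset (Finset V)) (n : ℕ) (σ : {σ : Finset V // σ ∈ F ∧ σ.card = n}) :
    Chains R F n := Finsupp.single σ (1 : R)

/-- The boundary of a single face of cardinality `i + 1`:
the alternating sum of its codimension-one subfaces. -/
def bdryGen (F : Finset (Finset V)) (i : ℕ) (σ : Finset V) : Chains R F i :=
  ∑ k ∈ Finset.range (i + 1),
    (-1 : R) ^ k •
      (if h : faceRemove σ k ∈ F ∧ (faceRemove σ k).card = i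
        then chainGen R F i ⟨faceRemove σ k, h⟩
        else 0)

/-- The simplicial boundary map, from chains of geometric degree `i` (faces of
cardinality `i + 1`) to chains of geometric degree `i - 1`. -/
def bdry (F : Finset (Finset V)) (i : ℕ) : Chains R F (i + 1) →ₗ[R] Chains R F i :=
  Finsupp.lsum R fun σ => LinearMap.toSpanSingleton R _ (bdryGen R F i σ.1)

/-- The augmentation map, sending each vertex to `1 : R`. -/
def augment (F : Finset (Finset V)) : Chains R F 1 →ₗ[R] R :=
  Finsupp.lsum R fun _ => LinearMap.id

/-- The submodule of cycles in geometric degree `i`. -/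
def cyclesSub (F : Finset (Finset V)) (i : ℕ) : Submodule R (Chains R F (i + 1)) :=
  LinearMap.ker (bdry R F i)

/-- The boundaries, viewed inside the cycles. -/
def bdriesIn (F : Finset (Finset V)) (i : ℕ) : Submodule R (cyclesSub R F i) :=
  (LinearMap.range (bdry R F (i + 1)) ⊓ cyclesSub R F i).comap (cyclesSub R F i).subtype

/-- The simplicial homology `H_i(F; R)` of a family `F` of faces: cycles modulo
boundaries in geometric degree `i`. -/
def simpH (F : Finset (Finset V)) (i : ℕ) : Type :=
  cyclesSub R F i ⧸ bdriesIn R F i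

instance (F : Finset (Finset V)) (i : ℕ) : AddCommGroup (simpH R F i) :=
  inferInstanceAs (AddCommGroup (cyclesSub R F i ⧸ bdriesIn R F i))

instance (F : Finset (Finset V)) (i : ℕ) : Module R (simpH R F i) :=
  inferInstanceAs (Module R (cyclesSub R F i ⧸ bdriesIn R F i))

/-- Reduced cycles: in degree `0` the kernel of the augmentation, in higher degrees the
usual cycles. -/
def redCycles (F : Finset (Finset V)) : (i : ℕ) → Submodule R (Chains R F (i + 1))
  | 0 => LinearMap.ker (augment R F)
  | (i + 1) => LinearMap.ker (bdry R F (i + 1))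

/-- The reduced boundaries, viewed inside the reduced cycles. -/
def redBdriesIn (F : Finset (Finset V)) (i : ℕ) : Submodule R (redCycles R F i) :=
  (LinearMap.range (bdry R F (i + 1)) ⊓ redCycles R F i).comap (redCycles R F i).subtype

/-- Reduced simplicial homology `H̃_i(F; R)`. -/
def redH (F : Finset (Finset V)) (i : ℕ) : Type :=
  redCycles R F i ⧸ redBdriesIn R F i

instance (F : Finset (Finset V)) (i : ℕ) : AddCommGroup (redH R F i) :=
  inferInstanceAs (AddCommGroup (redCycles R F i ⧸ redBdriesIn R F i))

instance (F : Finset (Finset V)) (i : ℕ) : Module R (redH R F i) :=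
  inferInstanceAs (Module R (redCycles R F i ⧸ redBdriesIn R F i))

/-- The chain map induced by an inclusion of families of faces. -/
def chainMap (F F' : Finset (Finset V)) (h : F ⊆ F') (n : ℕ) :
    Chains R F n →ₗ[R] Chains R F' n :=
  Finsupp.lsum R fun σ =>
    LinearMap.toSpanSingleton R _ (chainGen R F' n ⟨σ.1, h σ.2.1, σ.2.2⟩)

theorem bdry_single (F : Finset (Finset V)) (i : ℕ)
    (σ : {σ : Finset V // σ ∈ F ∧ σ.card = i + 1}) (r : R) :
    bdry R F i (Finsupp.single σ r) = r • bdryGen R F i σ.1 := by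
  show (Finsupp.lsum R fun σ => LinearMap.toSpanSingleton R _ (bdryGen R F i σ.1))
      (Finsupp.single σ r) = r • bdryGen R F i σ.1
  rw [Finsupp.lsum_single, LinearMap.toSpanSingleton_apply]

theorem chainMap_single (F F' : Finset (Finset V)) (h : F ⊆ F') (n : ℕ)
    (σ : {σ : Finset V // σ ∈ F ∧ σ.card = n}) (r : R) :
    chainMap R F F' h n (Finsupp.single σ r) =
      Finsupp.single (⟨σ.1, h σ.2.1, σ.2.2⟩ : {σ : Finset V // σ ∈ F' ∧ σ.card = n}) r := by
  show (Finsupp.lsum R fun σ =>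
      LinearMap.toSpanSingleton R _ (chainGen R F' n ⟨σ.1, h σ.2.1, σ.2.2⟩))
      (Finsupp.single σ r) = _
  rw [Finsupp.lsum_single, LinearMap.toSpanSingleton_apply, chainGen]
  exact (Finsupp.smul_single r _ (1 : R)).trans (by rw [smul_eq_mul, mul_one])

theorem chainMap_bdryGen (F F' : Finset (Finset V)) (h : F ⊆ F')
    (hdc : ∀ σ ∈ F, ∀ τ ⊆ σ, τ.Nonempty → τ ∈ F) (hne : (∅ : Finset V) ∉ F') (i : ℕ)
    (σ : Finset V) (hσ : σ ∈ F) :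
    chainMap R F F' h i (bdryGen R F i σ) = bdryGen R F' i σ := by
  unfold bdryGen
  rw [map_sum]
  refine Finset.sum_congr rfl fun k _ => ?_
  rw [map_smul]
  congr 1
  by_cases hc : faceRemove σ k ∈ F ∧ (faceRemove σ k).card = i
  · have hc' : faceRemove σ k ∈ F' ∧ (faceRemove σ k).card = i := ⟨h hc.1, hc.2⟩
    rw [dif_pos hc, dif_pos hc']
    rw [chainGen, chainMap_single]
    rfl
  · have hc' : ¬(faceRemove σ k ∈ F' ∧ (faceRemove σ k).card = i) := by
      rintro ⟨h1, h2⟩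
      refine hc ⟨?_, h2⟩
      have hnonempty : (faceRemove σ k).Nonempty := by
        rcases Finset.eq_empty_or_nonempty (faceRemove σ k) with he | hn
        · rw [he] at h1; exact absurd h1 hne
        · exact hn
      exact hdc σ hσ _ (faceRemove_subset σ k) hnonempty
    rw [dif_neg hc, dif_neg hc']
    rw [map_zero]

theorem bdry_comp_chainMap (F F' : Finset (Finset V)) (h : F ⊆ F')
    (hdc : ∀ σ ∈ F, ∀ τ ⊆ σ, τ.Nonempty → τ ∈ F) (hne : (∅ : Finset V) ∉ F') (i : ℕ) :
    (bdry R F' i).comp (chainMap R F F' h (i + 1)) =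
      (chainMap R F F' h i).comp (bdry R F i) := by
  apply Finsupp.lhom_ext
  intro σ r
  have key : (bdry R F' i) (chainMap R F F' h (i + 1)
        (Finsupp.single σ r : Chains R F (i + 1))) =
      (chainMap R F F' h i) (bdry R F i (Finsupp.single σ r : Chains R F (i + 1))) := by
    rw [chainMap_single, bdry_single, bdry_single, map_smul,
      chainMap_bdryGen R F F' h hdc hne i σ.1 σ.2.1]
  exact key

/-- The map induced on simplicial homology by an inclusion of families of faces. -/
def simpHMap (F F' : Finset (Finset V)) (h : F ⊆ F')
    (hdc : ∀ σ ∈ F, ∀ τ ⊆ σ, τ.Nonempty → τ ∈ F) (hne : (∅ : Finset V) ∉ F') (i : ℕ) :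
    simpH R F i →ₗ[R] simpH R F' i :=
  Submodule.mapQ (bdriesIn R F i) (bdriesIn R F' i)
    ((chainMap R F F' h (i + 1)).restrict (p := cyclesSub R F i) (q := cyclesSub R F' i)
      (fun x hx => by
        have hcomm := congrArg (fun φ => φ x) (bdry_comp_chainMap R F F' h hdc hne i)
        simp only [LinearMap.comp_apply] at hcomm
        simp only [cyclesSub, LinearMap.mem_ker] at hx ⊢
        rw [hcomm, hx, map_zero]))
    (by
      rintro ⟨x, hxker⟩ hx
      simp only [bdriesIn, Submodule.mem_comap, Submodule.mem_inf, Submodule.coe_subtype,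
        LinearMap.mem_range] at hx ⊢
      obtain ⟨⟨y, hy⟩, -⟩ := hx
      constructor
      · refine ⟨chainMap R F F' h (i + 2) y, ?_⟩
        have hcomm := congrArg (fun φ => φ y) (bdry_comp_chainMap R F F' h hdc hne (i + 1))
        simp only [LinearMap.comp_apply] at hcomm
        rw [LinearMap.restrict_coe_apply, hcomm, hy]
      · exact (((chainMap R F F' h (i + 1)).restrict _) ⟨x, hxker⟩).2)

/-- The `j`-th chain module of the weight-`0`, dimension-`i` überhomology complex:
the direct sum over all vertex subsets `S` of cardinality `j` of `H_i(X[S]; R)`. -/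
def UC (X : SComplex V) (i j : ℕ) : Type :=
  DirectSum {S : Finset V // S.card = j} fun S => simpH R (X.induced S.1) i

instance (X : SComplex V) (i j : ℕ) : AddCommGroup (UC R X i j) :=
  inferInstanceAs
    (AddCommGroup (DirectSum {S : Finset V // S.card = j} fun S => simpH R (X.induced S.1) i))

instance (X : SComplex V) (i j : ℕ) : Module R (UC R X i j) :=
  inferInstanceAs
    (Module R (DirectSum {S : Finset V // S.card = j} fun S => simpH R (X.induced S.1) i))

/-- The differential of the weight-`0` überhomology complex; its component from the
summand of `S` to the summand of `S ∪ {v}` (for `v ∉ S`) is `(-1) ^ #{u ∈ S | u < v}`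
times the map induced on homology by the inclusion `X[S] ⊆ X[S ∪ {v}]`. -/
def uberd (X : SComplex V) (i j : ℕ) : UC R X i j →ₗ[R] UC R X i (j + 1) :=
  DirectSum.toModule R _ _ fun S =>
    ∑ v ∈ S.1ᶜ.attach,
      ((-1 : R) ^ (S.1.filter fun u => u < v.1).card) •
        ((DirectSum.lof R {T : Finset V // T.card = j + 1}
              (fun T => simpH R (X.induced T.1) i)
              ⟨insert v.1 S.1, by
                rw [Finset.card_insert_of_notMem (Finset.mem_compl.mp v.2), S.2]⟩).comp
          (simpHMap R (X.induced S.1) (X.induced (insert v.1 S.1))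
            (X.induced_mono (Finset.subset_insert _ _))
            (X.induced_down S.1) (X.empty_not_mem_induced _) i))

/-- The submodule of über-coboundaries in cohomological degree `j`. -/
def uberBdries (X : SComplex V) (i : ℕ) : (j : ℕ) → Submodule R (UC R X i j)
  | 0 => ⊥
  | (j + 1) => LinearMap.range (uberd R X i j)

/-- The über-cocycles in cohomological degree `j`. -/
def uberCycles (X : SComplex V) (i j : ℕ) : Submodule R (UC R X i j) :=
  LinearMap.ker (uberd R X i j)

/-- The über-coboundaries, viewed inside the über-cocycles. -/
def uberBdriesIn (X : SComplex V) (i j : ℕ) : Submodule R (uberCycles R X i j) :=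
  (uberBdries R X i j ⊓ uberCycles R X i j).comap (uberCycles R X i j).subtype

/-- The `0`-degree überhomology `B^j_i(X; R)`: the homology at position `j` of the
cochain complex `(UC R X i •, uberd)`. -/
def uberB (X : SComplex V) (j i : ℕ) : Type :=
  uberCycles R X i j ⧸ uberBdriesIn R X i j

instance (X : SComplex V) (j i : ℕ) : AddCommGroup (uberB R X j i) :=
  inferInstanceAs (AddCommGroup (uberCycles R X i j ⧸ uberBdriesIn R X i j))

instance (X : SComplex V) (j i : ℕ) : Module R (uberB R X j i) :=
  inferInstanceAs (Module R (uberCycles R X i j ⧸ uberBdriesIn R X i j))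

/-- Bold homology `𝔹^j(X; R) := B^j_0(X; R)`. -/
abbrev Bold (X : SComplex V) (j : ℕ) : Type := uberB R X j 0

/-- The Euler characteristic of a simplicial complex. -/
def eulerChar (X : SComplex V) : ℤ := ∑ σ ∈ X.faces, (-1 : ℤ) ^ (σ.card - 1)

/-- The 1-skeleton of a simplicial complex, as a simple graph. -/
def oneSkeleton (X : SComplex V) : SimpleGraph V where
  Adj u v := u ≠ v ∧ ({u, v} : Finset V) ∈ X.faces
  symm := by
    constructor
    intro u v h
    exact ⟨h.1.symm, by rw [Finset.pair_comm]; exact h.2⟩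
  loopless := ⟨fun v h => h.1 rfl⟩

/-- A connected dominating set of a simple graph: a nonempty vertex set inducing a
connected subgraph such that every vertex lies in it or is adjacent to it. -/
def IsConnDomSet (G : SimpleGraph V) (S : Finset V) : Prop :=
  S.Nonempty ∧ (G.induce (S : Set V)).Connected ∧
    ∀ v : V, v ∈ S ∨ ∃ u ∈ S, G.Adj u v

section Classical
open Classical in
/-- A finite simple graph regarded as a 1-dimensional simplicial complex: its faces are
the singletons and the edges. -/
def graphComplex (G : SimpleGraph V) : SComplex V where
  faces := Finset.univ.filter fun σ => (∃ v, σ = {v}) ∨ ∃ u v, G.Adj u v ∧ σ = {u, v}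
  nonempty_mem := by
    intro σ hσ
    simp only [mem_filter, mem_univ, true_and] at hσ
    rcases hσ with ⟨v, rfl⟩ | ⟨u, v, -, rfl⟩
    · exact ⟨v, by simp⟩
    · exact ⟨u, by simp⟩
  singleton_mem := by
    intro v
    simp only [mem_filter, mem_univ, true_and]
    exact Or.inl ⟨v, rfl⟩
  down_closed := by
    intro σ hσ τ hτ hne
    simp only [mem_filter, mem_univ, true_and] at hσ ⊢
    have h1 : 1 ≤ τ.card := Finset.card_pos.mpr hne
    rcases Nat.lt_or_ge τ.card 2 with h2 | h2
    · have hcard : τ.card = 1 := by omega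
      obtain ⟨w, rfl⟩ := Finset.card_eq_one.mp hcard
      exact Or.inl ⟨w, rfl⟩
    · rcases hσ with ⟨v, rfl⟩ | ⟨u, v, hadj, rfl⟩
      · have := Finset.card_le_card hτ
        simp only [Finset.card_singleton] at this
        omega
      · have hcard : ({u, v} : Finset V).card ≤ 2 :=
          (Finset.card_insert_le u {v}).trans (by simp)
        have : τ = {u, v} := Finset.eq_of_subset_of_card_le hτ (by omega)
        exact Or.inr ⟨u, v, hadj, this⟩

open Classical in
/-- The connected domination polynomial of `G` evaluated at `-1`:
`D_c(G)(-1) = Σ_S (-1)^{|S|}` over connected dominating sets `S`. -/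
def cdSum (G : SimpleGraph V) : ℤ :=
  ∑ S ∈ Finset.univ.filter (fun S : Finset V => IsConnDomSet G S), (-1 : ℤ) ^ S.card

end Classical

end

noncomputable section
open Finset

variable {V : Type} [Fintype V] [LinearOrder V] (R : Type) [CommRing R]

/-- The row-`i` chain groups of the augmented first page of the Mayer–Vietoris spectral
sequence of the anti-star cover: `MVC R X i n = ⊕_{|J| = n} H_i(X[V∖J]; R)`, so that `n`
corresponds to the column `p = n - 1` (the summand for `J = ∅` being the augmentation
column `p = -1`, carrying `H_i(X;R)`). -/
def MVC (X : SComplex V) (i n : ℕ) : Type :=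
  DirectSum {J : Finset V // J.card = n} fun J => simpH R (X.induced J.1ᶜ) i

instance (X : SComplex V) (i n : ℕ) : AddCommGroup (MVC R X i n) :=
  inferInstanceAs
    (AddCommGroup (DirectSum {J : Finset V // J.card = n} fun J => simpH R (X.induced J.1ᶜ) i))

instance (X : SComplex V) (i n : ℕ) : Module R (MVC R X i n) :=
  inferInstanceAs
    (Module R (DirectSum {J : Finset V // J.card = n} fun J => simpH R (X.induced J.1ᶜ) i))

/-- The differential of the augmented first page of the Mayer–Vietoris spectral sequence:
its component from the summand of `J` to the summand of `J∖{v}` (for `v ∈ J`) is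
`(-1)^{#{u ∈ J | u < v}}` (the sign of the position of `v` among the ordered elements of
`J`) times the map induced on homology by the inclusion `X[V∖J] ⊆ X[V∖(J∖{v})]`. -/
def MVd (X : SComplex V) (i n : ℕ) : MVC R X i (n + 1) →ₗ[R] MVC R X i n :=
  DirectSum.toModule R _ _ fun J =>
    ∑ v ∈ J.1.attach,
      ((-1 : R) ^ (J.1.filter fun u => u < v.1).card) •
        ((DirectSum.lof R {J' : Finset V // J'.card = n}
              (fun J' => simpH R (X.induced J'.1ᶜ) i)
              ⟨J.1.erase v.1, by rw [Finset.card_erase_of_mem v.2, J.2]; rfl⟩).comp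
          (simpHMap R (X.induced J.1ᶜ) (X.induced (J.1.erase v.1)ᶜ)
            (X.induced_mono (Finset.compl_subset_compl.mpr (Finset.erase_subset _ _)))
            (X.induced_down _) (X.empty_not_mem_induced _) i))

/-- The cycles of the augmented Mayer–Vietoris complex at index `n` (column `p = n - 1`);
at the bottom index `n = 0` (the augmentation column `p = -1`) everything is a cycle. -/
def MVcycles (X : SComplex V) (i : ℕ) : (n : ℕ) → Submodule R (MVC R X i n)
  | 0 => ⊤
  | (n + 1) => LinearMap.ker (MVd R X i n)

/-- The boundaries, viewed inside the cycles. -/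
def MVbdriesIn (X : SComplex V) (i n : ℕ) : Submodule R (MVcycles R X i n) :=
  (LinearMap.range (MVd R X i n) ⊓ MVcycles R X i n).comap (MVcycles R X i n).subtype

/-- The homology of the augmented Mayer–Vietoris complex (the second page of the
augmented Mayer–Vietoris spectral sequence of the anti-star cover) at index `n`,
i.e. at the column `p = n - 1`. -/
def MVhom (X : SComplex V) (i n : ℕ) : Type :=
  MVcycles R X i n ⧸ MVbdriesIn R X i n

instance (X : SComplex V) (i n : ℕ) : AddCommGroup (MVhom R X i n) :=
  inferInstanceAs (AddCommGroup (MVcycles R X i n ⧸ MVbdriesIn R X i n))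

instance (X : SComplex V) (i n : ℕ) : Module R (MVhom R X i n) :=
  inferInstanceAs (Module R (MVcycles R X i n ⧸ MVbdriesIn R X i n))

end

section Aux
variable {V : Type} [Fintype V] [LinearOrder V] (R : Type) [CommRing R]

theorem chainMap_comp (F F' F'' : Finset (Finset V)) (h : F ⊆ F') (h' : F' ⊆ F'') (n : ℕ) :
    (chainMap R F' F'' h' n).comp (chainMap R F F' h n) = chainMap R F F'' (h.trans h') n := by
  apply Finsupp.lhom_ext
  intro σ r
  show chainMap R F' F'' h' n (chainMap R F F' h n (Finsupp.single σ r)) = _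
  rw [chainMap_single, chainMap_single]
  exact (chainMap_single R F F'' (h.trans h') n σ r).symm

theorem simpHMap_comp (F F' F'' : Finset (Finset V)) (h : F ⊆ F') (h' : F' ⊆ F'')
    (hdc : ∀ σ ∈ F, ∀ τ ⊆ σ, τ.Nonempty → τ ∈ F)
    (hdc' : ∀ σ ∈ F', ∀ τ ⊆ σ, τ.Nonempty → τ ∈ F')
    (hne' : (∅ : Finset V) ∉ F') (hne'' : (∅ : Finset V) ∉ F'') (i : ℕ) :
    (simpHMap R F' F'' h' hdc' hne'' i).comp (simpHMap R F F' h hdc hne' i) =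
      simpHMap R F F'' (h.trans h') hdc hne'' i := by
  apply LinearMap.ext
  intro x
  obtain ⟨y, rfl⟩ := Submodule.Quotient.mk_surjective _ x
  simp only [LinearMap.comp_apply, simpHMap, Submodule.mapQ_apply]
  refine congrArg Submodule.Quotient.mk (Subtype.ext ?_)
  simp only [LinearMap.restrict_coe_apply]
  exact congrArg (fun φ => φ y.1) (chainMap_comp R F F' F'' h h' (i+1))

end Aux
section Aux2
variable {V : Type} [Fintype V] [LinearOrder V] (R : Type) [CommRing R]

/-- Cast between homology modules of equal face families. -/
noncomputable def castH {F F' : Finset (Finset V)} (i : ℕ) (h : F = F') : simpH R F i ≃ₗ[R] simpH R F' i := by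
  subst h; exact LinearEquiv.refl R _

theorem castH_rfl {F : Finset (Finset V)} (i : ℕ) (h : F = F) (x : simpH R F i) :
    castH R i h x = x := rfl

/-- rank of a vertex -/
def rnk (v : V) : ℕ := (Finset.univ.filter (· < v)).card

/-- sign exponent of a finset of vertices -/
def eps (J : Finset V) : ℕ := ∑ v ∈ J, rnk v

theorem eps_erase {J : Finset V} {v : V} (hv : v ∈ J) : eps J = rnk v + eps (J.erase v) :=
  (Finset.add_sum_erase J rnk hv).symm

theorem rnk_split (J : Finset V) (v : V) :
    rnk v = (J.filter (· < v)).card + (Jᶜ.filter (· < v)).card := by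
  rw [rnk]
  rw [show (Finset.univ.filter (· < v)) = J.filter (· < v) ∪ Jᶜ.filter (· < v) by
    ext u; by_cases hu : u ∈ J <;> simp [hu]]
  rw [Finset.card_union_of_disjoint]
  exact Finset.disjoint_filter_filter disjoint_compl_right

theorem filter_lt_erase (J : Finset V) (v w : V) (hv : v ∈ J) (hvw : v ≠ w) :
    ((J.erase v).filter (· < w)).card =
      if v < w then (J.filter (· < w)).card - 1 else (J.filter (· < w)).card := by
  rw [Finset.filter_erase]
  by_cases hlt : v < w
  · rw [if_pos hlt]
    exact Finset.card_erase_of_mem (by simp [hv, hlt])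
  · rw [if_neg hlt, Finset.erase_eq_of_notMem]
    simp [hlt]

theorem neg_one_pow_parity {a b : ℕ} (h : a % 2 = b % 2) : ((-1 : R)) ^ a = (-1 : R) ^ b := by
  rcases Nat.even_or_odd a with ha | ha
  · have hb : Even b := by rw [Nat.even_iff] at *; omega
    rw [ha.neg_one_pow, hb.neg_one_pow]
  · have hb : Odd b := by rw [Nat.odd_iff] at *; omega
    rw [ha.neg_one_pow, hb.neg_one_pow]

theorem subsingleton_directSum {ι : Type} [DecidableEq ι] (M : ι → Type*)
    [∀ s, AddCommGroup (M s)] [∀ s, Module R (M s)] [IsEmpty ι] :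
    Subsingleton (DirectSum ι M) :=
  ⟨fun a b => DFinsupp.ext fun s => isEmptyElim s⟩

theorem ker_transfer {A B A' B' : Type} [AddCommGroup A] [Module R A] [AddCommGroup B]
    [Module R B] [AddCommGroup A'] [Module R A'] [AddCommGroup B'] [Module R B']
    (f : A →ₗ[R] B) (g : A' →ₗ[R] B') (eA : A ≃ₗ[R] A') (eB : B ≃ₗ[R] B')
    (h : eB.toLinearMap.comp f = g.comp eA.toLinearMap) :
    LinearMap.ker g = (LinearMap.ker f).map (eA : A →ₗ[R] A') := by
  ext x
  simp only [LinearMap.mem_ker, Submodule.mem_map]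
  constructor
  · intro hx
    refine ⟨eA.symm x, ?_, by simp⟩
    have := congrArg (fun φ => φ (eA.symm x)) h
    simp only [LinearMap.comp_apply, LinearEquiv.coe_coe, LinearEquiv.apply_symm_apply] at this
    apply eB.injective
    rw [this, hx, map_zero]
  · rintro ⟨y, hy, rfl⟩
    have := congrArg (fun φ => φ y) h
    simp only [LinearMap.comp_apply, LinearEquiv.coe_coe] at this
    rw [LinearEquiv.coe_coe, ← this, hy, map_zero]

theorem range_transfer {A B A' B' : Type} [AddCommGroup A] [Module R A] [AddCommGroup B]
    [Module R B] [AddCommGroup A'] [Module R A'] [AddCommGroup B'] [Module R B']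
    (f : A →ₗ[R] B) (g : A' →ₗ[R] B') (eA : A ≃ₗ[R] A') (eB : B ≃ₗ[R] B')
    (h : eB.toLinearMap.comp f = g.comp eA.toLinearMap) :
    LinearMap.range g = (LinearMap.range f).map (eB : B →ₗ[R] B') := by
  ext x
  simp only [LinearMap.mem_range, Submodule.mem_map]
  constructor
  · rintro ⟨y, rfl⟩
    refine ⟨f (eA.symm y), ⟨_, rfl⟩, ?_⟩
    have := congrArg (fun φ => φ (eA.symm y)) h
    simp only [LinearMap.comp_apply, LinearEquiv.coe_coe, LinearEquiv.apply_symm_apply] at this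
    exact this
  · rintro ⟨y, ⟨z, rfl⟩, rfl⟩
    have := congrArg (fun φ => φ z) h
    simp only [LinearMap.comp_apply, LinearEquiv.coe_coe] at this
    exact ⟨eA z, this.symm⟩

theorem quotTransfer {M M' : Type} [AddCommGroup M] [Module R M] [AddCommGroup M']
    [Module R M'] (e : M ≃ₗ[R] M') (p q : Submodule R M) (p' q' : Submodule R M')
    (hp : p' = p.map (e : M →ₗ[R] M')) (hq : q' = q.map (e : M →ₗ[R] M')) :
    Nonempty ((q ⧸ (p ⊓ q).comap q.subtype) ≃ₗ[R] (q' ⧸ (p' ⊓ q').comap q'.subtype)) := by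
  subst hp hq
  refine ⟨Submodule.Quotient.equiv _ _ (e.submoduleMap q) ?_⟩
  ext x
  obtain ⟨x, hx⟩ := x
  simp only [Submodule.mem_map, Submodule.mem_comap, Submodule.mem_inf,
    Submodule.coe_subtype] at *
  constructor
  · rintro ⟨y, ⟨hyp, hyq⟩, hyx⟩
    have hco : e y.1 = x := by
      have h2 := congrArg Subtype.val hyx
      simpa using h2
    exact ⟨⟨y.1, hyp, hco⟩, ⟨y.1, hyq, hco⟩⟩
  · rintro ⟨⟨z, hzp, hzx⟩, -⟩
    obtain ⟨w, hwq, hwx⟩ := hx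
    have hzw : z = w := e.injective (by simp only [LinearEquiv.coe_coe] at hzx hwx; rw [hzx, hwx])
    subst hzw
    refine ⟨⟨z, hwq⟩, ⟨hzp, hwq⟩, ?_⟩
    apply Subtype.ext
    simpa using hzx

end Aux2
section Aux3
variable {V : Type} [Fintype V] [LinearOrder V] (R : Type) [CommRing R]

theorem lof_simpHMap_congr (X : SComplex V) (t : Finset V → Finset V) (c i : ℕ)
    (F : Finset (Finset V)) (hdc : ∀ σ ∈ F, ∀ τ ⊆ σ, τ.Nonempty → τ ∈ F)
    (A A' : Finset V) (hAA' : A = A') (hc : A.card = c) (hc' : A'.card = c)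
    (h : F ⊆ X.induced (t A)) (h' : F ⊆ X.induced (t A')) (x : simpH R F i) :
    DirectSum.lof R {T : Finset V // T.card = c} (fun T => simpH R (X.induced (t T.1)) i)
      ⟨A, hc⟩ (simpHMap R F (X.induced (t A)) h hdc (X.empty_not_mem_induced _) i x) =
    DirectSum.lof R {T : Finset V // T.card = c} (fun T => simpH R (X.induced (t T.1)) i)
      ⟨A', hc'⟩ (simpHMap R F (X.induced (t A')) h' hdc (X.empty_not_mem_induced _) i x) := by
  subst hAA'; rfl

theorem lof_castH_congr (X : SComplex V) (t : Finset V → Finset V) (c i : ℕ)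
    (A A' : Finset V) (hAA' : A = A') (hc : A.card = c) (hc' : A'.card = c)
    (hF : X.induced (t A) = X.induced (t A')) (x : simpH R (X.induced (t A)) i) :
    DirectSum.lof R {T : Finset V // T.card = c} (fun T => simpH R (X.induced (t T.1)) i)
      ⟨A', hc'⟩ (castH R i hF x) =
    DirectSum.lof R {T : Finset V // T.card = c} (fun T => simpH R (X.induced (t T.1)) i)
      ⟨A, hc⟩ x := by
  subst hAA'; rfl

variable (X : SComplex V) (i : ℕ) {m : ℕ}

/-- Forward comparison map `MVC n → UC j` (for `n + j = m`), twisting the summand of `J`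
by `(-1)^(eps J)` and reindexing by complementation. -/
noncomputable def MVtoUC (hm : Fintype.card V = m) (n j : ℕ) (h : n + j = m) :
    MVC R X i n →ₗ[R] UC R X i j :=
  DirectSum.toModule R _ _ fun J =>
    ((-1 : R) ^ (eps J.1)) •
      (DirectSum.lof R {S : Finset V // S.card = j} (fun S => simpH R (X.induced S.1) i)
        ⟨J.1ᶜ, by rw [Finset.card_compl, J.2, hm]; omega⟩)

noncomputable def UCtoMV (hm : Fintype.card V = m) (n j : ℕ) (h : n + j = m) :
    UC R X i j →ₗ[R] MVC R X i n :=
  DirectSum.toModule R _ _ fun S =>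
    ((-1 : R) ^ (eps S.1ᶜ)) •
      ((DirectSum.lof R {J : Finset V // J.card = n} (fun J => simpH R (X.induced J.1ᶜ) i)
          ⟨S.1ᶜ, by rw [Finset.card_compl, S.2, hm]; omega⟩).comp
        (castH R i (by rw [compl_compl])).toLinearMap)

theorem MVtoUC_lof (hm : Fintype.card V = m) (n j : ℕ) (h : n + j = m)
    (J : {J : Finset V // J.card = n}) (x : simpH R (X.induced J.1ᶜ) i) :
    MVtoUC R X i hm n j h
        (DirectSum.lof R {J : Finset V // J.card = n}
          (fun J => simpH R (X.induced J.1ᶜ) i) J x) =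
      ((-1 : R) ^ (eps J.1)) •
        DirectSum.lof R {S : Finset V // S.card = j} (fun S => simpH R (X.induced S.1) i)
          ⟨J.1ᶜ, by rw [Finset.card_compl, J.2, hm]; omega⟩ x := by
  apply DirectSum.toModule_lof

theorem UCtoMV_lof (hm : Fintype.card V = m) (n j : ℕ) (h : n + j = m)
    (S : {S : Finset V // S.card = j}) (x : simpH R (X.induced S.1) i) :
    UCtoMV R X i hm n j h
        (DirectSum.lof R {S : Finset V // S.card = j}
          (fun S => simpH R (X.induced S.1) i) S x) =
      ((-1 : R) ^ (eps S.1ᶜ)) •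
        DirectSum.lof R {J : Finset V // J.card = n} (fun J => simpH R (X.induced J.1ᶜ) i)
          ⟨S.1ᶜ, by rw [Finset.card_compl, S.2, hm]; omega⟩
          (castH R i (by rw [compl_compl]) x) := by
  apply DirectSum.toModule_lof

theorem neg_one_pow_smul_self {M : Type} [AddCommGroup M] [Module R M] (a : ℕ) (z : M) :
    ((-1 : R) ^ a) • ((-1 : R) ^ a) • z = z := by
  rw [smul_smul, ← pow_add, Even.neg_one_pow ⟨a, by ring⟩, one_smul]

/-- The comparison equivalence. -/
noncomputable def MVUCequiv (hm : Fintype.card V = m) (n j : ℕ) (h : n + j = m) :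
    MVC R X i n ≃ₗ[R] UC R X i j := by
  refine LinearEquiv.ofLinear (MVtoUC R X i hm n j h) (UCtoMV R X i hm n j h) ?_ ?_
  · apply DirectSum.linearMap_ext
    intro S
    apply LinearMap.ext
    intro x
    show MVtoUC R X i hm n j h (UCtoMV R X i hm n j h
      (DirectSum.lof R {S : Finset V // S.card = j}
        (fun S => simpH R (X.induced S.1) i) S x)) =
      DirectSum.lof R {S : Finset V // S.card = j} (fun S => simpH R (X.induced S.1) i) S x
    rw [UCtoMV_lof R X i hm n j h S x]; erw [map_smul]; rw [MVtoUC_lof R X i hm n j h]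
    rw [lof_castH_congr R X (fun A => A) j i S.1 S.1ᶜᶜ (compl_compl S.1).symm S.2
      (by rw [compl_compl]; exact S.2) _ x]
    show ((-1 : R)) ^ (eps S.1ᶜ) • ((-1 : R)) ^ (eps S.1ᶜ) •
        DirectSum.lof R {S : Finset V // S.card = j}
          (fun S => simpH R (X.induced S.1) i) ⟨S.1, S.2⟩ x =
      DirectSum.lof R {S : Finset V // S.card = j} (fun S => simpH R (X.induced S.1) i) S x
    exact neg_one_pow_smul_self R _ _
  · apply DirectSum.linearMap_ext
    intro J
    apply LinearMap.ext
    intro x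
    show UCtoMV R X i hm n j h (MVtoUC R X i hm n j h
      (DirectSum.lof R {J : Finset V // J.card = n}
        (fun J => simpH R (X.induced J.1ᶜ) i) J x)) =
      DirectSum.lof R {J : Finset V // J.card = n} (fun J => simpH R (X.induced J.1ᶜ) i) J x
    rw [MVtoUC_lof R X i hm n j h J x]; erw [map_smul]; rw [UCtoMV_lof R X i hm n j h]
    rw [lof_castH_congr R X (fun A => Aᶜ) n i J.1 J.1ᶜᶜ (compl_compl J.1).symm J.2
      (by rw [compl_compl]; exact J.2) _ x]
    show ((-1 : R)) ^ (eps J.1) • ((-1 : R)) ^ (eps J.1ᶜᶜ) •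
        DirectSum.lof R {J : Finset V // J.card = n}
          (fun J => simpH R (X.induced J.1ᶜ) i) ⟨J.1, J.2⟩ x =
      DirectSum.lof R {J : Finset V // J.card = n} (fun J => simpH R (X.induced J.1ᶜ) i) J x
    rw [compl_compl]
    exact neg_one_pow_smul_self R _ _

end Aux3
section Aux4
variable {V : Type} [Fintype V] [LinearOrder V] (R : Type) [CommRing R]
variable (X : SComplex V) (i : ℕ) {m : ℕ}

theorem MVd_lof (n : ℕ) (J : {J : Finset V // J.card = n + 1})
    (x : simpH R (X.induced J.1ᶜ) i) :
    MVd R X i n (DirectSum.lof R {J : Finset V // J.card = n + 1}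
        (fun J => simpH R (X.induced J.1ᶜ) i) J x) =
      ∑ v ∈ J.1.attach, ((-1 : R) ^ (J.1.filter fun u => u < v.1).card) •
        DirectSum.lof R {J' : Finset V // J'.card = n} (fun J' => simpH R (X.induced J'.1ᶜ) i)
          ⟨J.1.erase v.1, by rw [Finset.card_erase_of_mem v.2, J.2]; rfl⟩
          (simpHMap R (X.induced J.1ᶜ) (X.induced (J.1.erase v.1)ᶜ)
            (X.induced_mono (Finset.compl_subset_compl.mpr (Finset.erase_subset _ _)))
            (X.induced_down _) (X.empty_not_mem_induced _) i x) := by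
  refine Eq.trans (by apply DirectSum.toModule_lof) ?_
  refine Eq.trans (map_sum (LinearMap.applyₗ x) _ _) ?_
  exact Finset.sum_congr rfl fun v _ => rfl

theorem uberd_lof (j : ℕ) (S : {S : Finset V // S.card = j}) (x : simpH R (X.induced S.1) i) :
    uberd R X i j (DirectSum.lof R {S : Finset V // S.card = j}
        (fun S => simpH R (X.induced S.1) i) S x) =
      ∑ v ∈ S.1ᶜ.attach, ((-1 : R) ^ (S.1.filter fun u => u < v.1).card) •
        DirectSum.lof R {T : Finset V // T.card = j + 1} (fun T => simpH R (X.induced T.1) i)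
          ⟨insert v.1 S.1, by
            rw [Finset.card_insert_of_notMem (Finset.mem_compl.mp v.2), S.2]⟩
          (simpHMap R (X.induced S.1) (X.induced (insert v.1 S.1))
            (X.induced_mono (Finset.subset_insert _ _)) (X.induced_down S.1)
            (X.empty_not_mem_induced _) i x) := by
  refine Eq.trans (by apply DirectSum.toModule_lof) ?_
  refine Eq.trans (map_sum (LinearMap.applyₗ x) _ _) ?_
  exact Finset.sum_congr rfl fun v _ => rfl

set_option maxHeartbeats 8000000 in
theorem MV_square (hm : Fintype.card V = m) (n j : ℕ) (h : n + j + 1 = m) :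
    (MVtoUC R X i hm n (j + 1) (by omega)).comp (MVd R X i n) =
      (uberd R X i j).comp (MVtoUC R X i hm (n + 1) j (by omega)) := by
  apply DirectSum.linearMap_ext
  intro J
  apply LinearMap.ext
  intro x
  show MVtoUC R X i hm n (j + 1) (by omega)
      (MVd R X i n (DirectSum.lof R {J : Finset V // J.card = n + 1}
        (fun J => simpH R (X.induced J.1ᶜ) i) J x)) =
    uberd R X i j (MVtoUC R X i hm (n + 1) j (by omega)
      (DirectSum.lof R {J : Finset V // J.card = n + 1}
        (fun J => simpH R (X.induced J.1ᶜ) i) J x))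
  rw [MVd_lof]; erw [map_sum]; rw [MVtoUC_lof]; erw [map_smul]; rw [uberd_lof]; erw [Finset.smul_sum (N := DirectSum {T : Finset V // T.card = j + 1} (fun T => simpH R (X.induced T.1) i))]
  refine Finset.sum_nbij' (fun v => ⟨v.1, by simp [v.2]⟩)
    (fun w => ⟨w.1, by simpa using w.2⟩) ?_ ?_ ?_ ?_ ?_
  · intro v _; exact Finset.mem_attach _ _
  · intro w _; exact Finset.mem_attach _ _
  · intro v _; rfl
  · intro w _; rfl
  · intro v _
    have hnot : v.1 ∉ (J.1)ᶜ := by simp [v.2]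
    have hcard : (insert v.1 J.1ᶜ).card = j + 1 := by
      rw [Finset.card_insert_of_notMem hnot, Finset.card_compl, J.2, hm]; omega
    have hcard' : ((J.1.erase v.1)ᶜ).card = j + 1 := by
      rw [Finset.compl_erase]; exact hcard
    have hsub : X.induced J.1ᶜ ⊆ X.induced (insert v.1 J.1ᶜ) := by
      rw [← Finset.compl_erase]
      exact X.induced_mono (Finset.compl_subset_compl.mpr (Finset.erase_subset _ _))
    erw [map_smul]; rw [MVtoUC_lof]
    rw [lof_simpHMap_congr R X (fun A => A) (j + 1) i (X.induced J.1ᶜ)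
      (X.induced_down _) ((J.1.erase v.1)ᶜ) (insert v.1 J.1ᶜ) (Finset.compl_erase)
      hcard' hcard
      (X.induced_mono (Finset.compl_subset_compl.mpr (Finset.erase_subset _ _)))
      hsub x]
    show ((-1 : R) ^ (J.1.filter fun u => u < v.1).card) •
        ((-1 : R) ^ (eps (J.1.erase v.1))) •
          DirectSum.lof R {T : Finset V // T.card = j + 1}
            (fun T => simpH R (X.induced T.1) i) ⟨insert v.1 J.1ᶜ, hcard⟩
            (simpHMap R (X.induced J.1ᶜ) (X.induced (insert v.1 J.1ᶜ)) hsub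
              (X.induced_down _) (X.empty_not_mem_induced _) i x) =
      ((-1 : R) ^ (eps J.1)) •
        ((-1 : R) ^ (J.1ᶜ.filter fun u => u < v.1).card) •
          DirectSum.lof R {T : Finset V // T.card = j + 1}
            (fun T => simpH R (X.induced T.1) i) ⟨insert v.1 J.1ᶜ, hcard⟩
            (simpHMap R (X.induced J.1ᶜ) (X.induced (insert v.1 J.1ᶜ)) hsub
              (X.induced_down _) (X.empty_not_mem_induced _) i x)
    rw [smul_smul, smul_smul, ← pow_add, ← pow_add]
    congr 1
    apply neg_one_pow_parity
    have h1 : eps J.1 = rnk v.1 + eps (J.1.erase v.1) := eps_erase v.2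
    have h2 : rnk v.1 = (J.1.filter (· < v.1)).card + (J.1ᶜ.filter (· < v.1)).card :=
      rnk_split J.1 v.1
    omega

end Aux4
section Aux5
variable {V : Type} [Fintype V] [LinearOrder V] (R : Type) [CommRing R]

theorem neg_one_pow_add_eq_zero {x y : ℕ} (h : (x + y) % 2 = 1) :
    ((-1 : R)) ^ x + (-1 : R) ^ y = 0 := by
  rcases Nat.even_or_odd x with hx | hx
  · have hy : Odd y := by rw [Nat.even_iff] at hx; rw [Nat.odd_iff]; omega
    rw [hx.neg_one_pow, hy.neg_one_pow]; ring
  · have hy : Even y := by rw [Nat.odd_iff] at hx; rw [Nat.even_iff]; omega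
    rw [hx.neg_one_pow, hy.neg_one_pow]; ring

theorem skew_parity {J : Finset V} {v w : V} (hv : v ∈ J) (hw : w ∈ J) (hvw : v ≠ w) :
    (((J.filter (· < v)).card + ((J.erase v).filter (· < w)).card) +
      ((J.filter (· < w)).card + ((J.erase w).filter (· < v)).card)) % 2 = 1 := by
  have h1 := filter_lt_erase J v w hv hvw
  have h2 := filter_lt_erase J w v hw hvw.symm
  rcases lt_or_gt_of_ne hvw with hlt | hlt
  · have hpos : 1 ≤ (J.filter (· < w)).card :=
      Finset.card_pos.mpr ⟨v, Finset.mem_filter.mpr ⟨hv, hlt⟩⟩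
    rw [if_pos hlt] at h1
    rw [if_neg (not_lt.mpr hlt.le)] at h2
    omega
  · have hpos : 1 ≤ (J.filter (· < v)).card :=
      Finset.card_pos.mpr ⟨w, Finset.mem_filter.mpr ⟨hw, hlt⟩⟩
    rw [if_neg (not_lt.mpr hlt.le)] at h1
    rw [if_pos hlt] at h2
    omega

theorem erase_erase_comm (s : Finset V) (a b : V) :
    (s.erase a).erase b = (s.erase b).erase a := by
  ext x; simp only [Finset.mem_erase]; tauto

variable (X : SComplex V) (i : ℕ)

set_option maxHeartbeats 1600000 in
theorem MV_skew (n : ℕ) (J : Finset V) (v w : V) (hv : v ∈ J) (hw : w ∈ J) (hvw : v ≠ w)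
    (hc1 : ((J.erase v).erase w).card = n) (hc2 : ((J.erase w).erase v).card = n)
    (hs1 : X.induced Jᶜ ⊆ X.induced ((J.erase v).erase w)ᶜ)
    (hs2 : X.induced Jᶜ ⊆ X.induced ((J.erase w).erase v)ᶜ)
    (x : simpH R (X.induced Jᶜ) i) :
    ((-1 : R) ^ (J.filter fun u => u < v).card *
        (-1 : R) ^ ((J.erase v).filter fun u => u < w).card) •
      DirectSum.lof R {J' : Finset V // J'.card = n} (fun J' => simpH R (X.induced J'.1ᶜ) i)
        ⟨(J.erase v).erase w, hc1⟩
        (simpHMap R (X.induced Jᶜ) (X.induced ((J.erase v).erase w)ᶜ) hs1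
          (X.induced_down _) (X.empty_not_mem_induced _) i x) +
    ((-1 : R) ^ (J.filter fun u => u < w).card *
        (-1 : R) ^ ((J.erase w).filter fun u => u < v).card) •
      DirectSum.lof R {J' : Finset V // J'.card = n} (fun J' => simpH R (X.induced J'.1ᶜ) i)
        ⟨(J.erase w).erase v, hc2⟩
        (simpHMap R (X.induced Jᶜ) (X.induced ((J.erase w).erase v)ᶜ) hs2
          (X.induced_down _) (X.empty_not_mem_induced _) i x) = 0 := by
  rw [lof_simpHMap_congr R X (fun A => Aᶜ) n i (X.induced Jᶜ) (X.induced_down _)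
    ((J.erase w).erase v) ((J.erase v).erase w) (erase_erase_comm J w v) hc2 hc1 hs2 hs1 x]
  rw [← add_smul]
  rw [← pow_add, ← pow_add]
  rw [neg_one_pow_add_eq_zero R (skew_parity hv hw hvw), zero_smul]

set_option maxHeartbeats 8000000 in
theorem MVd_sq (n : ℕ) : (MVd R X i n).comp (MVd R X i (n + 1)) = 0 := by
  apply DirectSum.linearMap_ext
  intro J
  apply LinearMap.ext
  intro x
  show MVd R X i n (MVd R X i (n + 1) (DirectSum.lof R {J : Finset V // J.card = n + 2}
      (fun J => simpH R (X.induced J.1ᶜ) i) J x)) = 0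
  rw [MVd_lof]; erw [map_sum]
  have key : ∀ (v : {y // y ∈ J.1}),
      MVd R X i n (((-1 : R) ^ (J.1.filter fun u => u < v.1).card) •
        DirectSum.lof R {J' : Finset V // J'.card = n + 1}
          (fun J' => simpH R (X.induced J'.1ᶜ) i)
          ⟨J.1.erase v.1, by rw [Finset.card_erase_of_mem v.2, J.2]; rfl⟩
          (simpHMap R (X.induced J.1ᶜ) (X.induced (J.1.erase v.1)ᶜ)
            (X.induced_mono (Finset.compl_subset_compl.mpr (Finset.erase_subset _ _)))
            (X.induced_down _) (X.empty_not_mem_induced _) i x)) =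
      ∑ w ∈ (J.1.erase v.1).attach,
        ((-1 : R) ^ (J.1.filter fun u => u < v.1).card *
            (-1 : R) ^ ((J.1.erase v.1).filter fun u => u < w.1).card) •
          DirectSum.lof R {J' : Finset V // J'.card = n}
            (fun J' => simpH R (X.induced J'.1ᶜ) i)
            ⟨(J.1.erase v.1).erase w.1, by
              rw [Finset.card_erase_of_mem w.2, Finset.card_erase_of_mem v.2, J.2]; rfl⟩
            (simpHMap R (X.induced J.1ᶜ) (X.induced ((J.1.erase v.1).erase w.1)ᶜ)
              (X.induced_mono (Finset.compl_subset_compl.mpr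
                ((Finset.erase_subset _ _).trans (Finset.erase_subset _ _))))
              (X.induced_down _) (X.empty_not_mem_induced _) i x) := by
    intro v
    erw [map_smul]; rw [MVd_lof]; erw [Finset.smul_sum (N := DirectSum {J' : Finset V // J'.card = n} (fun J' => simpH R (X.induced J'.1ᶜ) i))]
    refine Finset.sum_congr rfl fun w _ => ?_
    rw [smul_smul]
    have hcomp := congrArg (fun φ => φ x)
      (simpHMap_comp R (X.induced J.1ᶜ) (X.induced (J.1.erase v.1)ᶜ)
        (X.induced ((J.1.erase v.1).erase w.1)ᶜ)
        (X.induced_mono (Finset.compl_subset_compl.mpr (Finset.erase_subset _ _)))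
        (X.induced_mono (Finset.compl_subset_compl.mpr (Finset.erase_subset _ _)))
        (X.induced_down _) (X.induced_down _)
        (X.empty_not_mem_induced _) (X.empty_not_mem_induced _) i)
    simp only [LinearMap.comp_apply] at hcomp
    rw [hcomp]
  refine Eq.trans (Finset.sum_congr rfl fun v _ => key v) ?_
  erw [Finset.sum_sigma']
  refine Finset.sum_involution
    (fun a _ => ⟨⟨a.2.1, Finset.mem_of_mem_erase a.2.2⟩,
      ⟨a.1.1, Finset.mem_erase.mpr ⟨(Finset.ne_of_mem_erase a.2.2).symm, a.1.2⟩⟩⟩)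
    ?_ ?_ ?_ ?_
  · intro a _
    exact MV_skew R X i n J.1 a.1.1 a.2.1 a.1.2 (Finset.mem_of_mem_erase a.2.2)
      (Finset.ne_of_mem_erase a.2.2).symm _ _ _ _ x
  · intro a _ _ heq
    exact (Finset.ne_of_mem_erase a.2.2) (congrArg (fun z => z.1.1) heq)
  · intro a _
    exact Finset.mem_sigma.mpr ⟨Finset.mem_attach _ _, Finset.mem_attach _ _⟩
  · intro a _
    rfl

end Aux5
section Aux6
variable {V : Type} [Fintype V] [LinearOrder V] (R : Type) [CommRing R]

theorem isEmpty_index {m : ℕ} (hm : Fintype.card V = m) (c : ℕ) (hc : m < c) :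
    IsEmpty {J : Finset V // J.card = c} := by
  refine ⟨fun J => ?_⟩
  have h1 := Finset.card_le_univ J.1
  rw [J.2, hm] at h1
  omega

theorem MVC_subsingleton (X : SComplex V) (i : ℕ) {m : ℕ} (hm : Fintype.card V = m)
    (n : ℕ) (hn : m < n) : Subsingleton (MVC R X i n) := by
  haveI := isEmpty_index (V := V) hm n hn
  exact ⟨fun a b => DFinsupp.ext fun s => isEmptyElim s⟩

theorem UC_subsingleton (X : SComplex V) (i : ℕ) {m : ℕ} (hm : Fintype.card V = m)
    (c : ℕ) (hc : m < c) : Subsingleton (UC R X i c) := by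
  haveI := isEmpty_index (V := V) hm c hc
  exact ⟨fun a b => DFinsupp.ext fun s => isEmptyElim s⟩

theorem range_bot {A B : Type} [AddCommGroup A] [Module R A] [AddCommGroup B] [Module R B]
    (hs : Subsingleton A) (f : A →ₗ[R] B) : LinearMap.range f = ⊥ := by
  refine LinearMap.range_eq_bot.mpr (LinearMap.ext fun a => ?_)
  rw [Subsingleton.elim a 0, map_zero]
  rfl

theorem ker_top {A B : Type} [AddCommGroup A] [Module R A] [AddCommGroup B] [Module R B]
    (hs : Subsingleton B) (f : A →ₗ[R] B) : LinearMap.ker f = ⊤ :=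
  eq_top_iff.mpr fun a _ => Subsingleton.elim (f a) 0

end Aux6

theorem MV_second_page_iso_uberB' (R : Type) [CommRing R] (V : Type) [Fintype V]
    [LinearOrder V] (X : SComplex V) (m : ℕ) (hm : Fintype.card V = m) :
    (∀ i n : ℕ, (MVd R X i n).comp (MVd R X i (n + 1)) = 0) ∧
      (∀ i : ℕ, ∀ j ≤ m, Nonempty (MVhom R X i (m - j) ≃ₗ[R] uberB R X j i)) := by
  constructor
  · intro i n
    exact MVd_sq R X i n
  · intro i j hj
    by_cases hjm : j = m
    · subst hjm
      rw [Nat.sub_self]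
      refine quotTransfer R (MVUCequiv R X i hm 0 j (by omega))
        (LinearMap.range (MVd R X i 0)) ⊤
        (uberBdries R X i j) (uberCycles R X i j) ?_ ?_
      · cases j with
        | zero =>
          show (⊥ : Submodule R (UC R X i 0)) = _
          rw [range_bot R (MVC_subsingleton R X i hm 1 (by omega)) (MVd R X i 0),
            Submodule.map_bot]
        | succ m' =>
          show LinearMap.range (uberd R X i m') = _
          exact range_transfer R (MVd R X i 0) (uberd R X i m')
            (MVUCequiv R X i hm 1 m' (by omega)) (MVUCequiv R X i hm 0 (m' + 1) (by omega))
            (MV_square R X i hm 0 m' (by omega))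
      · show LinearMap.ker (uberd R X i j) = _
        rw [ker_top R (UC_subsingleton R X i hm (j + 1) (by omega)) (uberd R X i j),
          Submodule.map_top]
        exact (LinearMap.range_eq_top.mpr (MVUCequiv R X i hm 0 j (by omega)).surjective).symm
    · have hjlt : j < m := lt_of_le_of_ne hj hjm
      obtain ⟨k, hk⟩ : ∃ k, m - j = k + 1 := ⟨m - j - 1, by omega⟩
      have hkj : k + 1 + j = m := by omega
      rw [hk]
      refine quotTransfer R (MVUCequiv R X i hm (k + 1) j (by omega))
        (LinearMap.range (MVd R X i (k + 1))) (LinearMap.ker (MVd R X i k))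
        (uberBdries R X i j) (uberCycles R X i j) ?_ ?_
      · cases j with
        | zero =>
          show (⊥ : Submodule R (UC R X i 0)) = _
          rw [range_bot R (MVC_subsingleton R X i hm (k + 2) (by omega)) (MVd R X i (k + 1)),
            Submodule.map_bot]
        | succ j' =>
          show LinearMap.range (uberd R X i j') = _
          exact range_transfer R (MVd R X i (k + 1)) (uberd R X i j')
            (MVUCequiv R X i hm (k + 2) j' (by omega))
            (MVUCequiv R X i hm (k + 1) (j' + 1) (by omega))
            (MV_square R X i hm (k + 1) j' (by omega))
      · show LinearMap.ker (uberd R X i j) = _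
        exact ker_transfer R (MVd R X i k) (uberd R X i j)
          (MVUCequiv R X i hm (k + 1) j (by omega)) (MVUCequiv R X i hm k (j + 1) (by omega))
          (MV_square R X i hm k j (by omega))

/-- For a finite simplicial complex `X` on `m` vertices which is not the full
simplex, the augmented first page `(N_{•,i}, δ)` of the Mayer–Vietoris spectral sequence
of the anti-star cover satisfies `δ ∘ δ = 0`, and for every `i ≥ 0` and `0 ≤ j ≤ m` its
homology at position `p = m - j - 1` (i.e. at index `n = p + 1 = m - j`) is isomorphic, as
an `R`-module, to the `0`-degree überhomology `B^j_i(X;R)`. -/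
theorem MV_second_page_iso_uberB (R : Type) [CommRing R] (V : Type) [Fintype V]
    [LinearOrder V] (X : SComplex V) (m : ℕ) (hm : Fintype.card V = m)
    (hnotfull : ∃ σ : Finset V, σ.Nonempty ∧ σ ∉ X.faces) :
    (∀ i n : ℕ, (MVd R X i n).comp (MVd R X i (n + 1)) = 0) ∧
      (∀ i : ℕ, ∀ j ≤ m, Nonempty (MVhom R X i (m - j) ≃ₗ[R] uberB R X j i)) := by
  have h := MV_second_page_iso_uberB' R V X m hm
  exact ⟨fun i n => h.1 i n, h.2⟩
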